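/- arXiv:1208.3180 — 2 statements merged into one kernel-verified Lean document; each statement's English description precedes it below -/
import Mathlib

section
/- Let f : S¹ × S² → S¹ × S² be defined (identifying S² with ℂ ∪ {∞}) by f(z,w) = (z², (z+w)/3) for w ∈ ℂ and f(z,∞) = (z²,∞). Then f is a local homeomorphism, f maps the solid torus S¹ × 𝔻 (𝔻 the closed unit disc) into its interior, and f restricted to the attractor A = ⋂_{n≥0} f^n(S¹ × 𝔻) is injective, while f is not injective on S¹ × ℂ. -/
/-!
`f` is the fiberwise affine homeomorphism `(z, w) ↦ (z, (z + w) / 3)` of `S¹ × S²` followed by the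
double cover `z ↦ z²` of the first factor, hence a local homeomorphism. It maps `S¹ × 𝔻` into
`S¹ × 𝔻°`, and `f` is injective there: `f(z₁, c₁) = f(z₂, c₂)` with `z₂ = -z₁` would force
`c₂ - c₁ = 2 z₁`, of norm `2`, which is impossible for `c₁, c₂` in the open disc.
Since `A ⊆ f(S¹ × 𝔻)`, `f` is injective on `A`; yet `f(1, -1) = f(-1, 1)`.
-/

open OnePoint Metric Filter Topology Bornology Set Real

theorem IsLocalHomeomorph.prodMap {X Y X' Y' : Type*} [TopologicalSpace X] [TopologicalSpace Y]
    [TopologicalSpace X'] [TopologicalSpace Y'] {f : X → X'} {g : Y → Y'}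
    (hf : IsLocalHomeomorph f) (hg : IsLocalHomeomorph g) :
    IsLocalHomeomorph (Prod.map f g) := by
  rintro ⟨x, y⟩
  obtain ⟨e, hx, rfl⟩ := hf x
  obtain ⟨e', hy, rfl⟩ := hg y
  exact ⟨e.prod e', ⟨hx, hy⟩, rfl⟩

section AffineFiber

variable {X 𝕜 : Type*} [TopologicalSpace X] [NormedField 𝕜]

theorem tendsto_affine_nhds_prod_cobounded {a : 𝕜} (ha : a ≠ 0) {b : X → 𝕜}
    (hb : Continuous b) (x : X) :
    Tendsto (fun q : X × 𝕜 => a * q.2 + b q.1) (𝓝 x ×ˢ cobounded 𝕜) (cobounded 𝕜) := by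
  rw [← tendsto_norm_atTop_iff_cobounded]
  have hlin : Tendsto (fun q : X × 𝕜 => ‖a * q.2‖) (𝓝 x ×ˢ cobounded 𝕜) atTop :=
    tendsto_norm_cobounded_atTop.comp ((tendsto_mul_left_cobounded ha).comp tendsto_snd)
  have hb_lim : Tendsto (fun q : X × 𝕜 => -‖b q.1‖) (𝓝 x ×ˢ cobounded 𝕜) (𝓝 (-‖b x‖)) :=
    ((hb.tendsto x).norm.neg).comp tendsto_fst
  refine tendsto_atTop_mono (fun q => ?_) (hlin.atTop_add hb_lim)
  have := norm_sub_le (a * q.2 + b q.1) (b q.1)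
  rw [add_sub_cancel_right] at this
  linarith

theorem onePointMap_affine_leftInverse {a : 𝕜} (ha : a ≠ 0) (b : 𝕜) :
    Function.LeftInverse (OnePoint.map (a⁻¹ * · + -(a⁻¹ * b))) (OnePoint.map (a * · + b)) := by
  intro w
  induction w using OnePoint.rec with
  | infty => rfl
  | coe c => simp only [map_some, coe_eq_coe]; field_simp; ring

variable [ProperSpace 𝕜]

theorem continuous_onePointMap_affine {a : 𝕜} (ha : a ≠ 0) {b : X → 𝕜} (hb : Continuous b) :
    Continuous fun p : X × OnePoint 𝕜 => p.2.map (a * · + b p.1) := by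
  have hemb : IsOpenEmbedding (Prod.map id ((↑) : 𝕜 → OnePoint 𝕜) : X × 𝕜 → X × OnePoint 𝕜) :=
    IsOpenEmbedding.id.prodMap isOpenEmbedding_coe
  refine continuous_iff_continuousAt.2 fun ⟨x, w⟩ => ?_
  induction w using OnePoint.rec with
  | infty =>
    rw [ContinuousAt, nhds_prod_eq, nhds_infty_eq, prod_sup, tendsto_sup]
    refine ⟨?_, ?_⟩
    · have hcoe : Tendsto ((↑) : 𝕜 → OnePoint 𝕜) (cobounded 𝕜) (𝓝 ∞) := by
        rw [cobounded_eq_cocompact, ← coclosedCompact_eq_cocompact]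
        exact tendsto_coe_infty
      rw [← map_id (f := 𝓝 x), prod_map_map_eq, tendsto_map'_iff, coclosedCompact_eq_cocompact,
        ← cobounded_eq_cocompact]
      exact hcoe.comp (tendsto_affine_nhds_prod_cobounded ha hb x)
    · rw [prod_pure, tendsto_map'_iff]
      exact tendsto_const_nhds
  | coe c =>
    refine (hemb.continuousAt_iff (x := (x, c))).1 ?_
    exact (continuous_coe.comp (by fun_prop)).continuousAt

noncomputable def affineFiberHomeomorph (a : 𝕜) (ha : a ≠ 0) (b : X → 𝕜) (hb : Continuous b) :
    X × OnePoint 𝕜 ≃ₜ X × OnePoint 𝕜 where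
  toFun p := (p.1, p.2.map (a * · + b p.1))
  invFun p := (p.1, p.2.map (a⁻¹ * · + -(a⁻¹ * b p.1)))
  left_inv p := Prod.ext rfl (onePointMap_affine_leftInverse ha _ p.2)
  right_inv p := Prod.ext rfl <| by
    simpa [mul_inv_cancel_left₀ ha] using onePointMap_affine_leftInverse (inv_ne_zero ha) (-(a⁻¹ * b p.1)) p.2
  continuous_toFun := continuous_fst.prodMk (continuous_onePointMap_affine ha hb)
  continuous_invFun := continuous_fst.prodMk
    (continuous_onePointMap_affine (inv_ne_zero ha) (hb.const_mul _).neg)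

@[simp]
theorem affineFiberHomeomorph_apply (a : 𝕜) (ha : a ≠ 0) (b : X → 𝕜) (hb : Continuous b)
    (p : X × OnePoint 𝕜) : affineFiberHomeomorph a ha b hb p = (p.1, p.2.map (a * · + b p.1)) :=
  rfl

end AffineFiber

noncomputable def solenoidMap : Circle × OnePoint ℂ → Circle × OnePoint ℂ :=
  Prod.map (· ^ 2) id ∘
    affineFiberHomeomorph 3⁻¹ (by norm_num) (fun z : Circle => 3⁻¹ * (z : ℂ)) (by fun_prop)

@[simp]
theorem solenoidMap_coe (z : Circle) (c : ℂ) :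
    solenoidMap (z, c) = (z ^ 2, (((z + c) / 3 : ℂ) : OnePoint ℂ)) := by
  simp only [solenoidMap, Function.comp_apply, affineFiberHomeomorph_apply, map_some,
    Prod.map_apply, id, coe_eq_coe, Prod.mk.injEq, true_and]
  ring

@[simp]
theorem solenoidMap_infty (z : Circle) : solenoidMap (z, ∞) = (z ^ 2, ∞) := rfl

theorem eq_solenoidMap {f : Circle × OnePoint ℂ → Circle × OnePoint ℂ}
    (hfinf : ∀ z : Circle, f (z, ∞) = (z ^ 2, ∞))
    (hfc : ∀ (z : Circle) (c : ℂ), f (z, c) = (z ^ 2, (((z + c) / 3 : ℂ) : OnePoint ℂ))) :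
    f = solenoidMap := by
  funext ⟨z, w⟩
  induction w using OnePoint.rec with
  | infty => rw [hfinf, solenoidMap_infty]
  | coe c => rw [hfc, solenoidMap_coe]

theorem isLocalHomeomorph_solenoidMap : IsLocalHomeomorph solenoidMap :=
  ((Circle.isQuotientCoveringMap_npow 2).isCoveringMap.isLocalHomeomorph.prodMap
    (Homeomorph.refl _).isLocalHomeomorph).comp (Homeomorph.isLocalHomeomorph _)

theorem eq_of_sq_eq_of_add_eq {z₁ z₂ c₁ c₂ : ℂ} (hz₁ : ‖z₁‖ = 1) (hc₁ : ‖c₁‖ < 1)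
    (hc₂ : ‖c₂‖ < 1) (hsq : z₁ ^ 2 = z₂ ^ 2) (hadd : z₁ + c₁ = z₂ + c₂) : z₁ = z₂ := by
  refine (sq_eq_sq_iff_eq_or_eq_neg.1 hsq).resolve_right fun hneg => ?_
  have hdiff : c₂ - c₁ = 2 * z₁ := by linear_combination -hadd - hneg
  have : ‖c₂ - c₁‖ < 2 := (norm_sub_le _ _).trans_lt (by linarith)
  rw [hdiff, norm_mul, hz₁] at this
  norm_num at this

theorem norm_add_div_three_lt_one {z c : ℂ} (hz : ‖z‖ = 1) (hc : ‖c‖ ≤ 1) :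
    ‖(z + c) / 3‖ < 1 := by
  rw [norm_div, Complex.norm_ofNat]
  linarith [norm_add_le z c]

def solidTorus : Set (Circle × OnePoint ℂ) := univ ×ˢ ((↑) '' closedBall (0 : ℂ) 1)

def openSolidTorus : Set (Circle × OnePoint ℂ) := univ ×ˢ ((↑) '' ball (0 : ℂ) 1)

theorem openSolidTorus_subset_interior : openSolidTorus ⊆ interior solidTorus :=
  interior_maximal (prod_mono le_rfl (image_mono ball_subset_closedBall))
    (isOpen_univ.prod (isOpenMap_coe _ isOpen_ball))

theorem mapsTo_solenoidMap_solidTorus : MapsTo solenoidMap solidTorus openSolidTorus := by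
  rintro ⟨z, _⟩ ⟨-, c, hc, rfl⟩
  rw [mem_closedBall_zero_iff] at hc
  rw [solenoidMap_coe]
  exact ⟨mem_univ _, _, mem_ball_zero_iff.2 (norm_add_div_three_lt_one (Circle.norm_coe z) hc), rfl⟩

theorem injOn_solenoidMap_openSolidTorus : InjOn solenoidMap openSolidTorus := by
  rintro ⟨z₁, _⟩ ⟨-, c₁, hc₁, rfl⟩ ⟨z₂, _⟩ ⟨-, c₂, hc₂, rfl⟩ h
  rw [mem_ball_zero_iff] at hc₁ hc₂
  simp only [solenoidMap_coe, Prod.mk.injEq, coe_eq_coe] at h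
  obtain ⟨hsq, hadd⟩ := h
  have hadd : (z₁ : ℂ) + c₁ = z₂ + c₂ := by linear_combination 3 * hadd
  have hz : z₁ = z₂ := Subtype.ext <|
    eq_of_sq_eq_of_add_eq (Circle.norm_coe z₁) hc₁ hc₂ (by simp [← Circle.coe_pow, hsq]) hadd
  subst hz
  rw [add_left_cancel hadd]

theorem not_injOn_solenoidMap : ¬ InjOn solenoidMap (univ ×ˢ range ((↑) : ℂ → OnePoint ℂ)) := by
  intro hinj
  have hsq : Circle.exp π ^ 2 = 1 := by
    rw [← Circle.exp_natCast_mul]; push_cast; exact Circle.exp_two_pi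
  have hmem (z : Circle) (c : ℂ) :
      ((z, c) : Circle × OnePoint ℂ) ∈ univ ×ˢ range ((↑) : ℂ → OnePoint ℂ) :=
    ⟨mem_univ z, c, rfl⟩
  have := hinj (hmem 1 (Circle.exp π)) (hmem (Circle.exp π) 1)
    (by simp only [solenoidMap_coe, hsq, one_pow, Circle.coe_one, add_comm])
  exact Circle.exp_pi_ne_one (congrArg Prod.fst this).symm

/-- The counterexample on `S¹ × S²` (with `S²` the Riemann sphere `ℂ ∪ {∞}`):
`f(z,w) = (z², (z+w)/3)`, `f(z,∞) = (z²,∞)`.  Then `f` is a local homeomorphism,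
maps the solid torus `S¹ × 𝔻` into its interior, is injective on the attractor
`A = ⋂_{n≥0} fⁿ(S¹ × 𝔻)`, but is not injective on `S¹ × ℂ`. -/
theorem solenoid_counterexample
    (f : Circle × OnePoint ℂ → Circle × OnePoint ℂ)
    (hfinf : ∀ z : Circle, f (z, OnePoint.infty) = (z ^ 2, OnePoint.infty))
    (hfc : ∀ (z : Circle) (c : ℂ),
      f (z, (c : OnePoint ℂ)) = (z ^ 2, ((((z : ℂ) + c) / 3 : ℂ) : OnePoint ℂ)))
    (T : Set (Circle × OnePoint ℂ))
    (hT : T = (Set.univ : Set Circle) ×ˢ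
        ((fun c : ℂ => (c : OnePoint ℂ)) '' closedBall (0 : ℂ) 1))
    (A : Set (Circle × OnePoint ℂ)) (hA : A = ⋂ n : ℕ, f^[n] '' T) :
    IsLocalHomeomorph f ∧ f '' T ⊆ interior T ∧ Set.InjOn f A ∧
      ¬ Set.InjOn f ((Set.univ : Set Circle) ×ˢ
        Set.range (fun c : ℂ => (c : OnePoint ℂ))) := by
  obtain rfl := eq_solenoidMap hfinf hfc
  obtain rfl : T = solidTorus := hT
  have hA_sub : A ⊆ solenoidMap '' solidTorus := hA ▸ iInter_subset_of_subset 1 (by simp)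
  have himage : solenoidMap '' solidTorus ⊆ openSolidTorus :=
    mapsTo_solenoidMap_solidTorus.image_subset
  exact ⟨isLocalHomeomorph_solenoidMap, himage.trans openSolidTorus_subset_interior,
    injOn_solenoidMap_openSolidTorus.mono (hA_sub.trans himage), not_injOn_solenoidMap⟩
end

section
/- Let f : M → M be a continuous map of a compact manifold with an attracting pair (f,U) such that f has no critical points in U and f^{-1}(A) ∩ U = A, where A is the attracting set. Then no connected component of M \ A is entirely contained in U. -/
/-!
Let `C` be a component of `Aᶜ` inside `U`. Since `f` is open on `U`, `f(∂C) ⊆ A` and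
`f⁻¹(A) ∩ U = A`, the image `f(C)` is again a component of `Aᶜ` inside `U`, and the forward images
of `C` are pairwise disjoint: a periodic one would lie in every `fᵏ(U)`, hence in `A`.

If `C` is clopen, these images are infinitely many disjoint clopen sets, which a compact locally
connected space does not have. Otherwise `C` accumulates on `A`, so for large `m` it meets
`fᵐ(U)` without lying in it, and some `w ∈ closure (f(U))` has `fᵐ(w) ∈ C`. The components of
`U ∩ f⁻ᵐ(C)` through these points are pairwise disjoint with frontiers in `A ∪ ∂U`; by the
separation lemma only finitely many of them reach the frontier of a neighbourhood `W` of
`closure (f(U))` with `closure W ⊆ U`. For the others the frontier lies in `A`, so they are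
components of `Aᶜ` inside `U`, mapped by `fᵐ` onto `C`. Hence `C ⊆ fᵐ(U)` for all large `m`,
i.e. `C ⊆ A`, which is absurd.
-/

open Set Topology Function

section Frontier

variable {X Y : Type*} [TopologicalSpace X] [TopologicalSpace Y]

theorem IsPreconnected.subset_of_disjoint_frontier {s t : Set X} (hs : IsPreconnected s)
    (hst : (s ∩ t).Nonempty) (hfr : Disjoint s (frontier t)) : s ⊆ t := by
  have hint : s ∩ closure t ⊆ interior t := fun y hy ↦
    by_contra fun hyi ↦ disjoint_left.mp hfr hy.1 ⟨hy.2, hyi⟩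
  obtain ⟨x, hxs, hxt⟩ := hst
  refine (hs.subset_of_closure_inter_subset isOpen_interior
    ⟨x, hxs, hint ⟨hxs, subset_closure hxt⟩⟩ fun y hy ↦ ?_).trans interior_subset
  exact hint ⟨hy.2, closure_mono interior_subset hy.1⟩

theorem IsPreconnected.eq_connectedComponentIn {E F : Set X} {x : X} (hE : IsPreconnected E)
    (hEF : E ⊆ F) (hfr : Disjoint (frontier E) F) (hx : x ∈ E) :
    E = _root_.connectedComponentIn F x := by
  refine (hE.subset_connectedComponentIn hx hEF).antisymm ?_
  exact isPreconnected_connectedComponentIn.subset_of_disjoint_frontier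
    ⟨x, mem_connectedComponentIn (hEF hx), hx⟩
    (hfr.symm.mono_left (connectedComponentIn_subset F x))

theorem IsOpen.disjoint_frontier_connectedComponentIn [LocallyConnectedSpace X] {F : Set X}
    (hF : IsOpen F) (x : X) : Disjoint (frontier (connectedComponentIn F x)) F := by
  refine disjoint_left.mpr fun y hy hyF ↦ hy.2 ?_
  obtain ⟨z, hzy, hzx⟩ := mem_closure_iff.mp hy.1 _ hF.connectedComponentIn
    (mem_connectedComponentIn hyF)
  rw [hF.connectedComponentIn.interior_eq, connectedComponentIn_eq hzx,
    ← connectedComponentIn_eq hzy]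
  exact mem_connectedComponentIn hyF

theorem IsClosed.frontier_connectedComponentIn_compl_subset [LocallyConnectedSpace X] {A : Set X}
    (hA : IsClosed A) (x : X) : frontier (connectedComponentIn Aᶜ x) ⊆ A :=
  disjoint_compl_right_iff_subset.mp (hA.isOpen_compl.disjoint_frontier_connectedComponentIn x)

theorem frontier_connectedComponentIn_inter_preimage_subset [LocallyConnectedSpace X]
    {g : X → Y} {U : Set X} {V : Set Y} (hg : Continuous g) (hU : IsOpen U) (hV : IsOpen V)
    (x : X) :
    frontier (connectedComponentIn (U ∩ g ⁻¹' V) x) ⊆ frontier U ∪ (U ∩ g ⁻¹' frontier V) := by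
  intro z hz
  have hzO : z ∉ U ∩ g ⁻¹' V :=
    disjoint_left.mp ((hU.inter (hV.preimage hg)).disjoint_frontier_connectedComponentIn x) hz
  have hzcl : z ∈ closure (U ∩ g ⁻¹' V) :=
    closure_mono (connectedComponentIn_subset _ _) (frontier_subset_closure hz)
  by_cases hzU : z ∈ U
  · refine Or.inr ⟨hzU, ?_⟩
    rw [hV.frontier_eq]
    exact ⟨hg.closure_preimage_subset V (closure_mono inter_subset_right hzcl),
      fun hzV ↦ hzO ⟨hzU, hzV⟩⟩
  · rw [hU.frontier_eq]
    exact Or.inl ⟨closure_mono inter_subset_left hzcl, hzU⟩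

theorem frontier_image_subset_image_frontier [CompactSpace X] [T2Space Y] {g : X → Y}
    {s : Set X} (hg : Continuous g) (hs : IsOpen (g '' s)) :
    frontier (g '' s) ⊆ g '' frontier s := by
  rw [hs.frontier_eq, ← image_closure_of_isCompact isClosed_closure.isCompact hg.continuousOn]
  rintro _ ⟨⟨p, hp, rfl⟩, hps⟩
  exact ⟨p, ⟨hp, fun hpi ↦ hps ⟨p, interior_subset hpi, rfl⟩⟩, rfl⟩

theorem IsLocalHomeomorphOn.isOpen_image_of_subset {f : X → Y} {U t : Set X}
    (hf : IsLocalHomeomorphOn f U) (ht : IsOpen t) (htU : t ⊆ U) : IsOpen (f '' t) := by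
  rw [isOpen_iff_mem_nhds]
  rintro _ ⟨x, hxt, rfl⟩
  rw [← hf.map_nhds_eq (htU hxt)]
  exact Filter.image_mem_map (ht.mem_nhds hxt)

theorem IsLocalHomeomorphOn.iterate {f : X → X} {U : Set X} (hf : IsLocalHomeomorphOn f U)
    (hU : MapsTo f U U) (m : ℕ) : IsLocalHomeomorphOn f^[m] U := by
  induction m with
  | zero => exact (Homeomorph.refl X).isLocalHomeomorph.isLocalHomeomorphOn
  | succ m ih => rw [iterate_succ]; exact ih.comp hf hU

/-- Separation lemma: pairwise disjoint sets whose frontiers lie in a closed set `Z` cannot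
accumulate away from `Z`. -/
theorem finite_setOf_inter_nonempty_of_frontier_subset [LocallyConnectedSpace X] {ι : Type*}
    {E : ι → Set X} {Z K : Set X} (hdisj : Pairwise (Disjoint on E)) (hZ : IsClosed Z)
    (hK : IsCompact K) (hKZ : Disjoint K Z) (hfr : ∀ i, frontier (E i) ⊆ Z) :
    {i | (E i ∩ K).Nonempty}.Finite := by
  have hsub : ∀ {x i}, x ∉ Z → (E i ∩ connectedComponentIn Zᶜ x).Nonempty →
      connectedComponentIn Zᶜ x ⊆ E i := fun hx hi ↦
    isPreconnected_connectedComponentIn.subset_of_disjoint_frontier (inter_comm _ _ ▸ hi)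
      (disjoint_compl_left.mono (connectedComponentIn_subset _ _) (hfr _))
  obtain ⟨t, htK, hcover⟩ := hK.elim_nhds_subcover (fun x ↦ connectedComponentIn Zᶜ x)
    fun x hx ↦ hZ.isOpen_compl.connectedComponentIn.mem_nhds
      (mem_connectedComponentIn (disjoint_left.mp hKZ hx))
  have hfin : ∀ x ∈ t, {i | (E i ∩ connectedComponentIn Zᶜ x).Nonempty}.Finite := by
    intro x hx
    have hxZ := disjoint_left.mp hKZ (htK x hx)
    refine Subsingleton.finite fun i hi j hj ↦ hdisj.eq fun hij ↦ ?_
    exact disjoint_left.mp hij (hsub hxZ hi (mem_connectedComponentIn hxZ))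
      (hsub hxZ hj (mem_connectedComponentIn hxZ))
  refine (t.finite_toSet.biUnion hfin).subset fun i ⟨y, hyE, hyK⟩ ↦ ?_
  obtain ⟨x, hxt, hyx⟩ := mem_iUnion₂.mp (hcover hyK)
  exact mem_biUnion hxt ⟨y, hyE, hyx⟩

theorem finite_setOf_frontier_not_subset [CompactSpace X] [LocallyConnectedSpace X] {ι : Type*}
    {E : ι → Set X} {Z U W : Set X} (hdisj : Pairwise (Disjoint on E))
    (hconn : ∀ i, IsPreconnected (E i)) (hZ : IsClosed Z) (hU : IsOpen U) (hW : IsOpen W)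
    (hZW : Z ⊆ W) (hWU : closure W ⊆ U) (hfr : ∀ i, frontier (E i) ⊆ Z ∪ frontier U) :
    {i | (E i ∩ W).Nonempty ∧ ¬ frontier (E i) ⊆ Z}.Finite := by
  have hUfr : Disjoint U (frontier U) := by
    rw [hU.frontier_eq]; exact disjoint_sdiff_right
  have hWfr : frontier W ⊆ U := frontier_subset_closure.trans hWU
  have hdisjK : Disjoint (frontier W) (Z ∪ frontier U) := by
    refine disjoint_union_right.mpr ⟨?_, hUfr.mono_left hWfr⟩
    rw [hW.frontier_eq]
    exact disjoint_sdiff_left.mono_right hZW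
  refine (finite_setOf_inter_nonempty_of_frontier_subset hdisj (hZ.union isClosed_frontier)
    isClosed_frontier.isCompact hdisjK hfr).subset fun i ⟨hiW, hiZ⟩ ↦ by_contra fun hiK ↦ hiZ ?_
  have hEW : E i ⊆ W := (hconn i).subset_of_disjoint_frontier (inter_comm _ _ ▸ hiW)
    (disjoint_iff_inter_eq_empty.mpr (not_nonempty_iff_eq_empty.mp hiK))
  intro z hz
  refine (hfr i hz).resolve_right fun hzU ↦ disjoint_left.mp hUfr ?_ hzU
  exact hWU (closure_mono hEW (frontier_subset_closure hz))

end Frontier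

section AttractingSet

variable {X : Type*} {f : X → X} {U : Set X}

def attractingSet (f : X → X) (U : Set X) : Set X := ⋂ k : ℕ, f^[k] '' U

theorem mapsTo_of_closure_image_subset [TopologicalSpace X] (hattr : closure (f '' U) ⊆ U) :
    MapsTo f U U :=
  mapsTo_iff_image_subset.mpr (subset_closure.trans hattr)

theorem attractingSet_subset_iterate_image (k : ℕ) : attractingSet f U ⊆ f^[k] '' U :=
  iInter_subset _ k

theorem attractingSet_subset_closure_image [TopologicalSpace X] :
    attractingSet f U ⊆ closure (f '' U) :=
  (attractingSet_subset_iterate_image 1).trans subset_closure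

theorem antitone_iterate_image (hU : MapsTo f U U) : Antitone fun k ↦ f^[k] '' U :=
  antitone_nat_of_succ_le fun k ↦ by
    rw [iterate_succ, image_comp]
    exact image_mono hU.image_subset

theorem mapsTo_attractingSet (hU : MapsTo f U U) :
    MapsTo f (attractingSet f U) (attractingSet f U) := fun y hy ↦ mem_iInter.mpr fun k ↦ by
  refine antitone_iterate_image hU k.le_succ (?_ : f y ∈ f^[k + 1] '' U)
  rw [iterate_succ', image_comp]
  exact mem_image_of_mem f (attractingSet_subset_iterate_image k hy)

theorem subset_attractingSet_of_iterate_image_eq (hU : MapsTo f U U) {D : Set X} {j : ℕ}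
    (hDU : D ⊆ U) (hj : 0 < j) (hD : f^[j] '' D = D) : D ⊆ attractingSet f U := by
  have hDj : ∀ m, D ⊆ f^[j * m] '' U := by
    intro m
    induction m with
    | zero => simpa using hDU
    | succ m ih =>
      rw [Nat.mul_succ, add_comm, iterate_add, image_comp, ← hD]
      exact image_mono ih
  exact subset_iInter fun k ↦
    (hDj k).trans (antitone_iterate_image hU (Nat.le_mul_of_pos_left k hj))

theorem isClosed_attractingSet [TopologicalSpace X] [CompactSpace X] [T2Space X]
    (hf : Continuous f) (hattr : closure (f '' U) ⊆ U) : IsClosed (attractingSet f U) := by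
  have hA : attractingSet f U = ⋂ k : ℕ, f^[k] '' closure (f '' U) := by
    refine subset_antisymm (subset_iInter fun k ↦ ?_) (iInter_mono fun k ↦ image_mono hattr)
    refine (attractingSet_subset_iterate_image (k + 1)).trans ?_
    rw [iterate_succ, image_comp]
    exact image_mono subset_closure
  rw [hA]
  exact isClosed_iInter fun k ↦ (isClosed_closure.isCompact.image (hf.iterate k)).isClosed

theorem pairwise_disjoint_iterate_preimage {C : Set X}
    (hC : Pairwise (Disjoint on fun j ↦ f^[j] '' C)) :
    Pairwise (Disjoint on fun j ↦ f^[j] ⁻¹' C) := by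
  refine (pairwise_disjoint_on _).mpr fun i j hij ↦ disjoint_left.mpr fun z hzi hzj ↦ ?_
  have hzj' : f^[j] z ∈ f^[0] '' C := by simpa using hzj
  refine disjoint_left.mp (hC (Nat.sub_pos_of_lt hij).ne) hzj' ⟨f^[i] z, hzi, ?_⟩
  rw [← iterate_add_apply, Nat.sub_add_cancel hij.le]

theorem iterate_preimage_inter_subset {A : Set X} (hU : MapsTo f U U) (hpre : f ⁻¹' A ∩ U ⊆ A)
    (k : ℕ) : f^[k] ⁻¹' A ∩ U ⊆ A := by
  induction k with
  | zero => exact inter_subset_left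
  | succ k ih =>
    refine fun y ⟨hy, hyU⟩ ↦ hpre ⟨ih ⟨?_, hU hyU⟩, hyU⟩
    rwa [mem_preimage, iterate_succ_apply] at hy

theorem exists_mem_frontier_iterate_mem [TopologicalSpace X] [CompactSpace X] [T2Space X]
    (hf : Continuous f) (hU : IsOpen U) (hattr : closure (f '' U) ⊆ U)
    (hloc : IsLocalHomeomorphOn f U) {C : Set X} {m : ℕ}
    (hC : IsPreconnected C) (hCA : (closure C ∩ attractingSet f U).Nonempty)
    (hCm : ¬ C ⊆ f^[m] '' U) : ∃ v ∈ frontier U, f^[m] v ∈ C := by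
  have hUU := mapsTo_of_closure_image_subset hattr
  have hopen : IsOpen (f^[m] '' U) := (hloc.iterate hUU m).isOpen_image_of_subset hU subset_rfl
  obtain ⟨a, haC, haA⟩ := hCA
  obtain ⟨y, hym, hyC⟩ :=
    mem_closure_iff.mp haC _ hopen (attractingSet_subset_iterate_image m haA)
  obtain ⟨z, hzC, hzfr⟩ :=
    not_disjoint_iff.mp fun hd ↦ hCm (hC.subset_of_disjoint_frontier ⟨y, hyC, hym⟩ hd)
  obtain ⟨v, hv, rfl⟩ := frontier_image_subset_image_frontier (hf.iterate m) hopen hzfr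
  exact ⟨v, hv, hzC⟩

end AttractingSet

section Components

variable {X : Type*} [TopologicalSpace X] [CompactSpace X] [T2Space X] [LocallyConnectedSpace X]
  {f : X → X} {U A : Set X} {x : X}

theorem image_connectedComponentIn_compl (hf : Continuous f) (hloc : IsLocalHomeomorphOn f U)
    (hA : IsClosed A) (hfA : MapsTo f A A) (hpre : f ⁻¹' A ∩ U ⊆ A) (hx : x ∉ A)
    (hxU : connectedComponentIn Aᶜ x ⊆ U) :
    f '' connectedComponentIn Aᶜ x = connectedComponentIn Aᶜ (f x) := by
  refine (isPreconnected_connectedComponentIn.image f hf.continuousOn).eq_connectedComponentIn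
    ?_ ?_ (mem_image_of_mem f (mem_connectedComponentIn hx))
  · rintro _ ⟨y, hy, rfl⟩ hfy
    exact connectedComponentIn_subset _ _ hy (hpre ⟨hfy, hxU hy⟩)
  · refine disjoint_compl_right_iff_subset.mpr ?_
    calc frontier (f '' connectedComponentIn Aᶜ x)
        ⊆ f '' frontier (connectedComponentIn Aᶜ x) :=
          frontier_image_subset_image_frontier hf
            (hloc.isOpen_image_of_subset hA.isOpen_compl.connectedComponentIn hxU)
      _ ⊆ f '' A := image_mono (hA.frontier_connectedComponentIn_compl_subset x)
      _ ⊆ A := hfA.image_subset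

theorem iterate_image_connectedComponentIn_compl (hf : Continuous f)
    (hloc : IsLocalHomeomorphOn f U) (hUU : MapsTo f U U) (hA : IsClosed A) (hfA : MapsTo f A A)
    (hpre : f ⁻¹' A ∩ U ⊆ A) (hx : x ∉ A) (hxU : connectedComponentIn Aᶜ x ⊆ U) (j : ℕ) :
    f^[j] '' connectedComponentIn Aᶜ x = connectedComponentIn Aᶜ (f^[j] x) := by
  induction j with
  | zero => simp
  | succ j ih =>
    have hjA : f^[j] x ∉ A :=
      connectedComponentIn_subset _ _ (ih ▸ mem_image_of_mem _ (mem_connectedComponentIn hx))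
    have hjU : connectedComponentIn Aᶜ (f^[j] x) ⊆ U :=
      ih ▸ (image_mono hxU).trans (hUU.iterate j).image_subset
    rw [iterate_succ', image_comp, ih,
      image_connectedComponentIn_compl hf hloc hA hfA hpre hjA hjU, comp_apply]

end Components

section AttractingPair

variable {X : Type*} [TopologicalSpace X] [CompactSpace X] [T2Space X] [LocallyConnectedSpace X]
  {f : X → X} {U : Set X} {x : X}

theorem disjoint_iterate_image_connectedComponentIn (hf : Continuous f)
    (hattr : closure (f '' U) ⊆ U) (hloc : IsLocalHomeomorphOn f U)
    (hpre : f ⁻¹' attractingSet f U ∩ U ⊆ attractingSet f U) (hx : x ∉ attractingSet f U)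
    (hxU : connectedComponentIn (attractingSet f U)ᶜ x ⊆ U) {k : ℕ} (hk : 0 < k) :
    Disjoint (connectedComponentIn (attractingSet f U)ᶜ x)
      (f^[k] '' connectedComponentIn (attractingSet f U)ᶜ x) := by
  have hUU := mapsTo_of_closure_image_subset hattr
  have himg := iterate_image_connectedComponentIn_compl hf hloc hUU
    (isClosed_attractingSet hf hattr) (mapsTo_attractingSet hUU) hpre hx hxU k
  refine disjoint_left.mpr fun z hz hzk ↦ hx ?_
  have hper : f^[k] '' connectedComponentIn (attractingSet f U)ᶜ x =
      connectedComponentIn (attractingSet f U)ᶜ x := by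
    rw [himg, connectedComponentIn_eq (himg ▸ hzk), ← connectedComponentIn_eq hz]
  exact subset_attractingSet_of_iterate_image_eq hUU hxU hk hper (mem_connectedComponentIn hx)

theorem pairwise_disjoint_iterate_image_connectedComponentIn (hf : Continuous f)
    (hattr : closure (f '' U) ⊆ U) (hloc : IsLocalHomeomorphOn f U)
    (hpre : f ⁻¹' attractingSet f U ∩ U ⊆ attractingSet f U) (hx : x ∉ attractingSet f U)
    (hxU : connectedComponentIn (attractingSet f U)ᶜ x ⊆ U) :
    Pairwise (Disjoint on fun j ↦ f^[j] '' connectedComponentIn (attractingSet f U)ᶜ x) := by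
  have hUU := mapsTo_of_closure_image_subset hattr
  refine (pairwise_disjoint_on _).mpr fun i j hij ↦ ?_
  have himg := iterate_image_connectedComponentIn_compl hf hloc hUU
    (isClosed_attractingSet hf hattr) (mapsTo_attractingSet hUU) hpre hx hxU i
  have hix : f^[i] x ∉ attractingSet f U := fun h ↦
    hx (iterate_preimage_inter_subset hUU hpre i ⟨h, hxU (mem_connectedComponentIn hx)⟩)
  have hiU : connectedComponentIn (attractingSet f U)ᶜ (f^[i] x) ⊆ U :=
    himg ▸ (image_mono hxU).trans (hUU.iterate i).image_subset
  have hj : f^[j] = f^[j - i] ∘ f^[i] := by rw [← iterate_add, Nat.sub_add_cancel hij.le]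
  simp only [hj, image_comp, himg]
  exact disjoint_iterate_image_connectedComponentIn hf hattr hloc hpre hix hiU
    (Nat.sub_pos_of_lt hij)

theorem not_isClosed_connectedComponentIn (hf : Continuous f)
    (hattr : closure (f '' U) ⊆ U) (hloc : IsLocalHomeomorphOn f U)
    (hpre : f ⁻¹' attractingSet f U ∩ U ⊆ attractingSet f U) (hx : x ∉ attractingSet f U)
    (hxU : connectedComponentIn (attractingSet f U)ᶜ x ⊆ U) :
    ¬ IsClosed (connectedComponentIn (attractingSet f U)ᶜ x) := by
  intro hC
  have hUU := mapsTo_of_closure_image_subset hattr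
  have hA := isClosed_attractingSet hf hattr
  have hclopen : ∀ j, IsClopen (f^[j] '' connectedComponentIn (attractingSet f U)ᶜ x) := by
    refine fun j ↦ ⟨(hC.isCompact.image (hf.iterate j)).isClosed, ?_⟩
    rw [iterate_image_connectedComponentIn_compl hf hloc hUU hA (mapsTo_attractingSet hUU) hpre
      hx hxU j]
    exact hA.isOpen_compl.connectedComponentIn
  have hfin := finite_setOf_inter_nonempty_of_frontier_subset
    (pairwise_disjoint_iterate_image_connectedComponentIn hf hattr hloc hpre hx hxU)
    isClosed_empty isCompact_univ (disjoint_empty _)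
    fun j ↦ (isClopen_iff_frontier_eq_empty.mp (hclopen j)).subset
  exact infinite_univ (hfin.subset fun j _ ↦
    ⟨f^[j] x, mem_image_of_mem _ (mem_connectedComponentIn hx), mem_univ _⟩)

theorem exists_mem_closure_image_iterate_mem (hf : Continuous f) (hU : IsOpen U)
    (hattr : closure (f '' U) ⊆ U) (hloc : IsLocalHomeomorphOn f U) {m : ℕ}
    (hC : ¬ IsClosed (connectedComponentIn (attractingSet f U)ᶜ x))
    (hCm : ¬ connectedComponentIn (attractingSet f U)ᶜ x ⊆ f^[m] '' U) :
    ∃ w ∈ closure (f '' U), f^[m] w ∈ connectedComponentIn (attractingSet f U)ᶜ x := by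
  have hUU := mapsTo_of_closure_image_subset hattr
  have hA := isClosed_attractingSet hf hattr
  obtain ⟨a, haC, ha⟩ := not_subset.mp (mt isClosed_of_closure_subset hC)
  have hafr : a ∈ frontier (connectedComponentIn (attractingSet f U)ᶜ x) := by
    rw [hA.isOpen_compl.connectedComponentIn.frontier_eq]
    exact ⟨haC, ha⟩
  obtain ⟨v, hv, hvC⟩ := exists_mem_frontier_iterate_mem hf hU hattr hloc
    isPreconnected_connectedComponentIn
    ⟨a, haC, hA.frontier_connectedComponentIn_compl_subset x hafr⟩
    fun h ↦ hCm (h.trans (antitone_iterate_image hUU m.le_succ))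
  refine ⟨f v, image_closure_subset_closure_image hf ⟨v, frontier_subset_closure hv, rfl⟩, ?_⟩
  rwa [← iterate_succ_apply]

theorem subset_iterate_image_of_frontier_subset (hf : Continuous f)
    (hattr : closure (f '' U) ⊆ U) (hloc : IsLocalHomeomorphOn f U)
    (hpre : f ⁻¹' attractingSet f U ∩ U ⊆ attractingSet f U) {w : X} {m : ℕ} (hwU : w ∈ U)
    (hw : f^[m] w ∈ connectedComponentIn (attractingSet f U)ᶜ x)
    (hfr : frontier (connectedComponentIn
      (U ∩ f^[m] ⁻¹' connectedComponentIn (attractingSet f U)ᶜ x) w) ⊆ attractingSet f U) :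
    connectedComponentIn (attractingSet f U)ᶜ x ⊆ f^[m] '' U := by
  have hUU := mapsTo_of_closure_image_subset hattr
  set E := connectedComponentIn (U ∩ f^[m] ⁻¹' connectedComponentIn (attractingSet f U)ᶜ x) w
  have hEU : E ⊆ U := (connectedComponentIn_subset _ _).trans inter_subset_left
  have hEA : E ⊆ (attractingSet f U)ᶜ := fun z hz hzA ↦
    connectedComponentIn_subset _ _ (connectedComponentIn_subset _ _ hz).2
      ((mapsTo_attractingSet hUU).iterate m hzA)
  have hwE : w ∈ E := mem_connectedComponentIn ⟨hwU, hw⟩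
  have hE : E = connectedComponentIn (attractingSet f U)ᶜ w :=
    isPreconnected_connectedComponentIn.eq_connectedComponentIn hEA
      (disjoint_compl_right_iff_subset.mpr hfr) hwE
  calc connectedComponentIn (attractingSet f U)ᶜ x
      = connectedComponentIn (attractingSet f U)ᶜ (f^[m] w) := connectedComponentIn_eq hw
    _ = f^[m] '' E := by
      rw [hE, iterate_image_connectedComponentIn_compl hf hloc hUU
        (isClosed_attractingSet hf hattr) (mapsTo_attractingSet hUU) hpre (hEA hwE) (hE ▸ hEU)]
    _ ⊆ f^[m] '' U := image_mono hEU

theorem exists_frontier_connectedComponentIn_subset (hf : Continuous f) (hU : IsOpen U)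
    (hattr : closure (f '' U) ⊆ U) (hloc : IsLocalHomeomorphOn f U)
    (hpre : f ⁻¹' attractingSet f U ∩ U ⊆ attractingSet f U) (hx : x ∉ attractingSet f U)
    (hxU : connectedComponentIn (attractingSet f U)ᶜ x ⊆ U) {w : ℕ → X} {N : ℕ}
    (hwcl : ∀ m ≥ N, w m ∈ closure (f '' U))
    (hwC : ∀ m ≥ N, f^[m] (w m) ∈ connectedComponentIn (attractingSet f U)ᶜ x) :
    ∃ m ≥ N, frontier (connectedComponentIn
      (U ∩ f^[m] ⁻¹' connectedComponentIn (attractingSet f U)ᶜ x) (w m)) ⊆ attractingSet f U := by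
  have hUU := mapsTo_of_closure_image_subset hattr
  have hA := isClosed_attractingSet hf hattr
  set C := connectedComponentIn (attractingSet f U)ᶜ x
  set E := fun m ↦ connectedComponentIn (U ∩ f^[m] ⁻¹' C) (w m)
  obtain ⟨W, hW, hclW, hWU⟩ := normal_exists_closure_subset isClosed_closure hU hattr
  have hdisj : Pairwise (Disjoint on E) := fun i j hij ↦
    (pairwise_disjoint_iterate_preimage (pairwise_disjoint_iterate_image_connectedComponentIn
      hf hattr hloc hpre hx hxU) hij).mono
      ((connectedComponentIn_subset _ _).trans inter_subset_right)
      ((connectedComponentIn_subset _ _).trans inter_subset_right)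
  have hfr : ∀ m, frontier (E m) ⊆ attractingSet f U ∪ frontier U := fun m z hz ↦ by
    rcases frontier_connectedComponentIn_inter_preimage_subset (hf.iterate m) hU
      hA.isOpen_compl.connectedComponentIn (w m) hz with hzU | ⟨hzU, hzC⟩
    · exact Or.inr hzU
    · exact Or.inl (iterate_preimage_inter_subset hUU hpre m
        ⟨hA.frontier_connectedComponentIn_compl_subset x hzC, hzU⟩)
  obtain ⟨b, hb⟩ := (finite_setOf_frontier_not_subset hdisj
    (fun _ ↦ isPreconnected_connectedComponentIn) hA hU hW
    (attractingSet_subset_closure_image.trans hclW) hWU hfr).bddAbove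
  have hm : N ≤ max N (b + 1) := le_max_left _ _
  refine ⟨max N (b + 1), hm, by_contra fun hnot ↦ ?_⟩
  have hwE : w (max N (b + 1)) ∈ E (max N (b + 1)) :=
    mem_connectedComponentIn ⟨hattr (hwcl _ hm), hwC _ hm⟩
  have := hb ⟨⟨_, hwE, hclW (hwcl _ hm)⟩, hnot⟩
  omega

end AttractingPair

theorem no_component_of_complement_in_U_general
    {n : ℕ} {M : Type} [TopologicalSpace M] [CompactSpace M] [T2Space M]
    [ChartedSpace (EuclideanSpace ℝ (Fin n)) M]
    (f : M → M) (hf : Continuous f) (U : Set M) (hU : IsOpen U)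
    (hattr : closure (f '' U) ⊆ U)
    (A : Set M) (hA : A = ⋂ k : ℕ, f^[k] '' U)
    (hloc : IsLocalHomeomorphOn f U) (hpre : f ⁻¹' A ∩ U = A) :
    ∀ x ∈ Aᶜ, ¬ connectedComponentIn Aᶜ x ⊆ U := by
  have := ChartedSpace.locallyConnectedSpace (EuclideanSpace ℝ (Fin n)) M
  obtain rfl : A = attractingSet f U := hA
  intro x hx hxU
  have hUU := mapsTo_of_closure_image_subset hattr
  have hC := not_isClosed_connectedComponentIn hf hattr hloc hpre.subset hx hxU
  obtain ⟨N, hN⟩ : ∃ N, ¬ connectedComponentIn (attractingSet f U)ᶜ x ⊆ f^[N] '' U := by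
    by_contra! h
    exact hx (subset_iInter h (mem_connectedComponentIn hx))
  have : Nonempty M := ⟨x⟩
  choose! w hwcl hwC using fun m (hm : N ≤ m) ↦ exists_mem_closure_image_iterate_mem hf hU hattr
    hloc hC fun h ↦ hN (h.trans (antitone_iterate_image hUU hm))
  obtain ⟨m, hm, hfr⟩ :=
    exists_frontier_connectedComponentIn_subset hf hU hattr hloc hpre.subset hx hxU hwcl hwC
  exact hN ((subset_iterate_image_of_frontier_subset hf hattr hloc hpre.subset
    (hattr (hwcl m hm)) (hwC m hm) hfr).trans (antitone_iterate_image hUU hm))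

/-- On a compact manifold: if `(f, U)` is an attracting pair such that `f` has no
critical points in `U` (i.e. `f` is a local homeomorphism on `U`) and
`f⁻¹(A) ∩ U = A`, where `A` is the attracting set, then no connected component of
`M \ A` is entirely contained in `U`. -/
theorem no_component_of_complement_in_U
    {n : ℕ} {M : Type} [TopologicalSpace M] [CompactSpace M] [T2Space M]
    [ChartedSpace (EuclideanSpace ℝ (Fin n)) M]
    (f : M → M) (hf : Continuous f) (U : Set M) (hU : IsOpen U) (hne : U.Nonempty)
    (hproper : U ≠ Set.univ) (hattr : closure (f '' U) ⊆ U)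
    (A : Set M) (hA : A = ⋂ k : ℕ, f^[k] '' U)
    (hloc : IsLocalHomeomorphOn f U) (hpre : f ⁻¹' A ∩ U = A) :
    ∀ x ∈ Aᶜ, ¬ connectedComponentIn Aᶜ x ⊆ U :=
  no_component_of_complement_in_U_general (n := n) f hf U hU hattr A hA hloc hpre
end
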